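/- arXiv:1211.1582 — 3 statements merged into one kernel-verified Lean document; each statement's English description precedes it below -/
import Mathlib

section
/- For every nonnegative integer n, the Euler polynomial satisfies E_n(x) = n! ∑_{k=0}^{n} ( δ_k / (2^k (n-k)!) ∑_{0 ≤ l ≤ n-k, l even} C(n-k, l) E_{n-k-l} l! / (2^l ((2k+l)/2)! (l/2)!) ) T_k(x), with δ_0 = 1 and δ_k = 2 for k ≥ 1. -/
/-!
`E_n` is an Appell sequence: substituting the induction hypothesis into the defining recurrence
and using `C(n,k) C(k,j) = C(n,j) C(n-j,k-j)` gives `E_n(x) = ∑_j C(n,j) E_{n-j} x^j`.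
Iterating `2x T_m = T_{m+1} + T_{m-1}` gives `(2x)^p = ∑_{i+j=p} C(p,i) T_{j-i}`; since
`T_{-m} = T_m`, the terms with `|j - i| = k` collect to `δ_k C(p, (p-k)/2) T_k` when `p - k` is
even, and to nothing otherwise. Writing `j = k + l`, the coefficient of `T_k` in `E_n` becomes a
sum over even `l`, and the factorials of the formula are those of `C(n, k+l) C(k+l, l/2)`.
-/

open Polynomial Nat

/-- The Euler polynomials `E n`, defined by the recurrence
`E n + ∑_{k ≤ n} C(n,k) E k = 2 xⁿ`, equivalent to the generating function
`2 e^{xt}/(e^t + 1) = ∑ E n (x) tⁿ/n!`. -/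
noncomputable def eulerPoly : ℕ → ℚ[X]
  | n => X ^ n - C (1 / 2) * ∑ k : Fin n, C ((n.choose k : ℚ)) * eulerPoly k
decreasing_by exact k.isLt

open Finset

lemma sum_range_sum_range_succ_eq {M : Type*} [AddCommMonoid M] (n : ℕ) (F : ℕ → ℕ → M) :
    ∑ m ∈ range n, ∑ k ∈ range (m + 1), F m k =
      ∑ k ∈ range n, ∑ l ∈ range (n - k), F (k + l) k := by
  rw [← sum_range_diag_flip]
  refine sum_congr rfl fun m _ => sum_congr rfl fun k hk => ?_
  rw [Nat.add_sub_cancel' (mem_range_succ_iff.mp hk)]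

noncomputable def eulerNum (m : ℕ) : ℚ := (eulerPoly m).eval 0

lemma eulerPoly_eq_sub_sum (n : ℕ) :
    eulerPoly n = X ^ n - C (1 / 2) * ∑ k ∈ range n, (n.choose k : ℚ[X]) * eulerPoly k := by
  rw [eulerPoly, ← Fin.sum_univ_eq_sum_range fun k => (n.choose k : ℚ[X]) * eulerPoly k]
  simp only [map_natCast]

lemma eulerNum_zero : eulerNum 0 = 1 := by
  simp [eulerNum, eulerPoly_eq_sub_sum 0]

lemma sum_range_choose_mul_eulerNum {n : ℕ} (hn : n ≠ 0) :
    ∑ k ∈ range n, (n.choose k : ℚ) * eulerNum k = -2 * eulerNum n := by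
  have h := congrArg (eval 0) (eulerPoly_eq_sub_sum n)
  simp only [eval_sub, eval_pow, eval_X, zero_pow hn, eval_mul, eval_C, eval_finsetSum,
    eval_natCast] at h
  unfold eulerNum
  rw [h]
  ring

lemma eulerPoly_eq_sum_X_pow (n : ℕ) :
    eulerPoly n = ∑ j ∈ range (n + 1), (n.choose j : ℚ[X]) * C (eulerNum (n - j)) * X ^ j := by
  induction n using Nat.strong_induction_on with
  | _ n ih =>
  have hsum : ∑ k ∈ range n, (n.choose k : ℚ[X]) * eulerPoly k =
      -2 * ∑ j ∈ range n, (n.choose j : ℚ[X]) * C (eulerNum (n - j)) * X ^ j := by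
    calc ∑ k ∈ range n, (n.choose k : ℚ[X]) * eulerPoly k
        = ∑ k ∈ range n, ∑ j ∈ range (k + 1),
            (n.choose k * k.choose j : ℚ[X]) * C (eulerNum (k - j)) * X ^ j := by
          refine sum_congr rfl fun k hk => ?_
          rw [ih k (mem_range.mp hk), mul_sum]
          simp only [mul_assoc]
      _ = ∑ j ∈ range n, ∑ i ∈ range (n - j),
            (n.choose j * (n - j).choose i : ℚ[X]) * C (eulerNum i) * X ^ j := by
          rw [sum_range_sum_range_succ_eq]
          refine sum_congr rfl fun j hj => sum_congr rfl fun i hi => ?_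
          rw [mem_range] at hj hi
          rw [← Nat.cast_mul, ← Nat.cast_mul, Nat.choose_mul (by omega),
            Nat.add_sub_cancel_left]
      _ = ∑ j ∈ range n, (n.choose j : ℚ[X]) *
            C (∑ i ∈ range (n - j), ((n - j).choose i : ℚ) * eulerNum i) * X ^ j := by
          simp only [map_sum, C_mul, map_natCast, mul_sum, sum_mul, mul_assoc]
      _ = -2 * ∑ j ∈ range n, (n.choose j : ℚ[X]) * C (eulerNum (n - j)) * X ^ j := by
          rw [mul_sum]
          refine sum_congr rfl fun j hj => ?_
          rw [sum_range_choose_mul_eulerNum (by simp at hj; omega), C_mul, C_neg, C_ofNat]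
          ring
  have hhalf : (C (1 / 2) : ℚ[X]) * 2 = 1 := by
    rw [← C_ofNat, ← C_mul]
    norm_num
  rw [eulerPoly_eq_sub_sum, hsum, sum_range_succ, Nat.choose_self, Nat.sub_self, eulerNum_zero,
    Nat.cast_one, C_1, one_mul]
  linear_combination (∑ j ∈ range n, (n.choose j : ℚ[X]) * C (eulerNum (n - j)) * X ^ j) * hhalf

-- Meant for `k ≤ p`: beyond that the truncated `p - k` is `0`, which counts as even.
def chebyshevTCoeff (p k : ℕ) : ℕ :=
  if Even (p - k) then (if k = 0 then 1 else 2) * p.choose ((p - k) / 2) else 0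

lemma sum_choose_filter_natAbs_eq_chebyshevTCoeff {p k : ℕ} (hk : k ≤ p) :
    ∑ ij ∈ antidiagonal p with ((ij.2 : ℤ) - ij.1).natAbs = k, p.choose ij.1 =
      chebyshevTCoeff p k := by
  unfold chebyshevTCoeff
  split_ifs with heven hk0
  · have hfib : {ij ∈ antidiagonal p | ((ij.2 : ℤ) - ij.1).natAbs = k} = {(p / 2, p / 2)} := by
      ext ⟨i, j⟩
      simp only [mem_filter, HasAntidiagonal.mem_antidiagonal, mem_singleton, Prod.mk.injEq]
      rw [Nat.even_iff] at heven
      omega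
    rw [hfib, sum_singleton, hk0, Nat.sub_zero, one_mul]
  · have hfib : {ij ∈ antidiagonal p | ((ij.2 : ℤ) - ij.1).natAbs = k} =
        {((p - k) / 2, (p + k) / 2), ((p + k) / 2, (p - k) / 2)} := by
      ext ⟨i, j⟩
      simp only [mem_filter, HasAntidiagonal.mem_antidiagonal, mem_insert, mem_singleton,
        Prod.mk.injEq]
      rw [Nat.even_iff] at heven
      omega
    have hne : ((p - k) / 2, (p + k) / 2) ≠ ((p + k) / 2, (p - k) / 2) := by
      rw [Nat.even_iff] at heven
      simp only [ne_eq, Prod.mk.injEq]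
      omega
    rw [hfib, sum_pair hne, two_mul, Nat.choose_symm_of_eq_add]
    rw [Nat.even_iff] at heven
    omega
  · refine sum_eq_zero fun ij hij => absurd ?_ heven
    rw [mem_filter, HasAntidiagonal.mem_antidiagonal] at hij
    rw [Nat.even_iff]
    omega

namespace Polynomial.Chebyshev

variable {R : Type*} [CommRing R]

lemma two_mul_X_mul_T (n : ℤ) : 2 * X * T R n = T R (n + 1) + T R (n - 1) := by
  linear_combination -T_add_one R n

lemma two_mul_X_pow_eq_sum_antidiagonal (p : ℕ) :
    (2 * X : R[X]) ^ p = ∑ ij ∈ antidiagonal p, (p.choose ij.1 : R[X]) * T R (ij.2 - ij.1) := by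
  induction p with
  | zero => simp
  | succ p ih =>
    rw [sum_antidiagonal_choose_succ_mul (fun i j => T R ((j : ℤ) - i)), _root_.pow_succ', ih,
      mul_sum, ← sum_add_distrib]
    refine sum_congr rfl fun ij hij => ?_
    rw [HasAntidiagonal.mem_antidiagonal] at hij
    rw [← hij, Nat.choose_symm_add, mul_left_comm, two_mul_X_mul_T, mul_add]
    congr 3 <;> push_cast <;> ring

lemma two_mul_X_pow_eq_sum_T (p : ℕ) :
    (2 * X : R[X]) ^ p = ∑ k ∈ range (p + 1), (chebyshevTCoeff p k : R[X]) * T R k := by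
  have hmaps : ∀ ij ∈ antidiagonal p, ((ij.2 : ℤ) - ij.1).natAbs ∈ range (p + 1) := by
    intro ij hij
    rw [HasAntidiagonal.mem_antidiagonal] at hij
    rw [mem_range]
    omega
  rw [two_mul_X_pow_eq_sum_antidiagonal, ← sum_fiberwise_of_maps_to hmaps]
  refine sum_congr rfl fun k hk => ?_
  rw [← sum_choose_filter_natAbs_eq_chebyshevTCoeff (mem_range_succ_iff.mp hk), Nat.cast_sum,
    sum_mul]
  refine sum_congr rfl fun ij hij => ?_
  rw [(mem_filter.mp hij).2.symm, T_natAbs]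

end Polynomial.Chebyshev

lemma X_pow_eq_sum_chebyshev_T {K : Type*} [Field K] [NeZero (2 : K)] (p : ℕ) :
    (X : K[X]) ^ p =
      ∑ k ∈ range (p + 1), C ((chebyshevTCoeff p k : K) / 2 ^ p) * Chebyshev.T K k := by
  have hX : (X : K[X]) ^ p = C (2 ^ p)⁻¹ * (2 * X) ^ p := by
    rw [mul_pow, ← mul_assoc, ← C_ofNat, ← C_pow, ← C_mul,
      inv_mul_cancel₀ (pow_ne_zero _ two_ne_zero), C_1, one_mul]
  rw [hX, Chebyshev.two_mul_X_pow_eq_sum_T, mul_sum]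
  refine sum_congr rfl fun k _ => ?_
  rw [← mul_assoc, ← map_natCast C, ← C_mul, inv_mul_eq_div]

lemma chebyshevTCoeff_add_left (k l : ℕ) :
    chebyshevTCoeff (k + l) k =
      if Even l then (if k = 0 then 1 else 2) * (k + l).choose (l / 2) else 0 := by
  rw [chebyshevTCoeff, Nat.add_sub_cancel_left]

section

variable {K : Type*} [Field K] [CharZero K]

lemma factorial_mul_sum_even_eq_sum_chebyshevTCoeff (a : ℕ → K) {n k : ℕ} (hk : k ≤ n) :
    (n ! : K) * ((if k = 0 then 1 else 2) / (2 ^ k * (n - k)!) *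
      ∑ l ∈ range (n - k + 1) with Even l,
        ((n - k).choose l : K) * a (n - k - l) * l ! / (2 ^ l * ((2 * k + l) / 2)! * (l / 2)!)) =
    ∑ l ∈ range (n + 1 - k), (n.choose (k + l) : K) * a (n - (k + l)) *
      (chebyshevTCoeff (k + l) k / 2 ^ (k + l)) := by
  rw [show n + 1 - k = n - k + 1 by omega, sum_filter, mul_sum, mul_sum]
  refine sum_congr rfl fun l hl => ?_
  rw [chebyshevTCoeff_add_left]
  by_cases hl_even : Even l
  · obtain ⟨i, rfl⟩ := hl_even
    rw [mem_range] at hl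
    rw [← two_mul] at hl ⊢
    simp only [even_two_mul, if_true]
    push_cast
    generalize (if k = 0 then (1 : K) else 2) = d
    rw [show (2 * k + 2 * i) / 2 = k + i by omega, show 2 * i / 2 = i by omega,
      show n - k - 2 * i = n - (k + 2 * i) by omega,
      Nat.cast_choose K (by omega : k + 2 * i ≤ n),
      Nat.cast_choose K (by omega : i ≤ k + 2 * i), Nat.cast_choose K (by omega : 2 * i ≤ n - k),
      show n - k - 2 * i = n - (k + 2 * i) by omega, show k + 2 * i - i = k + i by omega]
    have hfact (m : ℕ) : (m ! : K) ≠ 0 := Nat.cast_ne_zero.mpr m.factorial_ne_zero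
    field_simp [hfact]
    ring
  · simp only [hl_even, if_false, Nat.cast_zero, zero_div, mul_zero]

theorem sum_choose_mul_X_pow_eq_sum_chebyshev_T (a : ℕ → K) (n : ℕ) :
    ∑ j ∈ range (n + 1), (n.choose j : K[X]) * C (a (n - j)) * X ^ j =
      C (n ! : K) *
        ∑ k ∈ range (n + 1),
          C ((if k = 0 then (1 : K) else 2) / (2 ^ k * (n - k)!) *
              ∑ l ∈ range (n - k + 1) with Even l,
                ((n - k).choose l : K) * a (n - k - l) * l ! /
                  (2 ^ l * ((2 * k + l) / 2)! * (l / 2)!)) *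
            Chebyshev.T K k := by
  calc ∑ j ∈ range (n + 1), (n.choose j : K[X]) * C (a (n - j)) * X ^ j
      = ∑ j ∈ range (n + 1), ∑ k ∈ range (j + 1),
          C ((n.choose j : K) * a (n - j) * (chebyshevTCoeff j k / 2 ^ j)) * Chebyshev.T K k := by
        refine sum_congr rfl fun j _ => ?_
        rw [X_pow_eq_sum_chebyshev_T, mul_sum]
        refine sum_congr rfl fun k _ => ?_
        rw [← mul_assoc, ← map_natCast C, ← C_mul, ← C_mul]
    _ = ∑ k ∈ range (n + 1), ∑ l ∈ range (n + 1 - k),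
          C ((n.choose (k + l) : K) * a (n - (k + l)) * (chebyshevTCoeff (k + l) k / 2 ^ (k + l))) *
            Chebyshev.T K k :=
        sum_range_sum_range_succ_eq _ _
    _ = _ := by
        rw [mul_sum]
        refine sum_congr rfl fun k hk => ?_
        rw [← sum_mul, ← map_sum, ← mul_assoc, ← C_mul,
          factorial_mul_sum_even_eq_sum_chebyshevTCoeff a (mem_range_succ_iff.mp hk)]

end

theorem stmt_6 (n : ℕ) :
    eulerPoly n =
      C (n ! : ℚ) *
        ∑ k ∈ Finset.range (n + 1),
          C ((if k = 0 then (1 : ℚ) else 2) / (2 ^ k * (n - k)!) *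
              ∑ l ∈ (Finset.range (n - k + 1)).filter (fun l => Even l),
                ((n - k).choose l : ℚ) * (eulerPoly (n - k - l)).eval 0 * l ! /
                  (2 ^ l * ((2 * k + l) / 2)! * (l / 2)!)) *
            Polynomial.Chebyshev.T ℚ k := by
  rw [eulerPoly_eq_sum_X_pow]
  exact sum_choose_mul_X_pow_eq_sum_chebyshev_T eulerNum n
end

section
/- For every nonnegative integer n, H_n(x) = n! ∑_{k=0}^{n} ( (k+1) ∑_{0 ≤ l ≤ n-k, l even} H_{n-k-l} / ((n-k-l)! ((2k+l+2)/2)! (l/2)!) ) U_k(x). -/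
/-!
The generating function `e^{2xt - t²} = e^{-t²} e^{2xt}` suggests the Appell expansion
`H_n(x) = ∑ₚ C(n, p) H_{n-p}(0) (2x)^p`, which follows from `H_n' = 2n H_{n-1}` since both sides
have the same derivative and the same value at `0`. Since `2x U_k = U_{k+1} + U_{k-1}`, the powers
of `2x` expand in the `U_k` with ballot numbers as coefficients:
`(2x)^p = ∑_{2j ≤ p} b(p, j) U_{p-2j}`, `b(p, j) = (p - 2j + 1) p! / (j! (p - j + 1)!)`.
Substituting and reindexing by `k = p - 2j`, `l = 2j` gives the formula.
-/

open Polynomial Nat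

/-- The physicists' Hermite polynomials, with generating function
`e^{2xt - t²} = ∑ H n (x) tⁿ/n!`, via the recurrence `H_{n+1} = 2x H_n - H_n'`. -/
noncomputable def physHermite : ℕ → ℚ[X]
  | 0 => 1
  | n + 1 => C 2 * X * physHermite n - derivative (physHermite n)

open Finset

lemma physHermite_succ (n : ℕ) :
    physHermite (n + 1) = C 2 * X * physHermite n - derivative (physHermite n) := rfl

theorem derivative_physHermite_succ (n : ℕ) :
    derivative (physHermite (n + 1)) = C (2 * (n + 1 : ℚ)) * physHermite n := by
  induction n with
  | zero => simp [physHermite, C_ofNat]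
  | succ n ih =>
    rw [physHermite_succ (n + 1), derivative_sub, derivative_mul, derivative_mul, ih,
      derivative_mul, physHermite_succ n]
    simp only [derivative_C, derivative_X]
    simp only [map_mul, map_add, map_natCast, map_one, C_ofNat]
    push_cast
    ring

theorem physHermite_eq_sum_choose_mul_pow (n : ℕ) :
    physHermite n =
      ∑ p ∈ range (n + 1), C ((n.choose p : ℚ) * (physHermite (n - p)).eval 0) * (2 * X) ^ p := by
  induction n with
  | zero => simp [physHermite]
  | succ n ih =>
    set Q := ∑ p ∈ range (n + 2),
      C (((n + 1).choose p : ℚ) * (physHermite (n + 1 - p)).eval 0) * (2 * X : ℚ[X]) ^ p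
    have hQ : derivative Q = C (2 * (n + 1 : ℚ)) * physHermite n := by
      rw [ih, mul_sum, derivative_sum, sum_range_succ']
      simp only [derivative_mul, derivative_C, zero_mul, zero_add, derivative_pow, derivative_X]
      simp only [derivative_ofNat, Nat.cast_zero, map_zero, zero_mul, mul_zero, add_zero,
        Nat.add_sub_cancel, Nat.add_sub_add_right]
      refine sum_congr rfl fun p _ => ?_
      have h : (((n + 1).choose (p + 1) : ℕ) : ℚ[X]) * (p + 1) = (n + 1) * n.choose p := by
        exact_mod_cast (Nat.add_one_mul_choose_eq n p).symm
      simp only [map_mul, map_natCast, map_add, map_one, C_ofNat]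
      push_cast
      linear_combination 2 * C (eval 0 (physHermite (n - p))) * (2 * X) ^ p * h
    have h0 : (physHermite (n + 1) - Q).eval 0 = 0 := by
      simp [Q, eval_finsetSum, sum_range_succ']
    have hconst := eq_C_of_derivative_eq_zero (p := physHermite (n + 1) - Q)
      (by rw [derivative_sub, hQ, derivative_physHermite_succ, sub_self])
    rwa [coeff_zero_eq_eval_zero, h0, map_zero, sub_eq_zero] at hconst

def ballotNumber (p j : ℕ) : ℚ := ((p : ℚ) + 1 - 2 * j) * p ! / (j ! * (p + 1 - j)!)

lemma ballotNumber_zero_right (p : ℕ) : ballotNumber p 0 = 1 := by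
  simp only [ballotNumber, Nat.sub_zero, Nat.factorial_succ]
  push_cast
  field_simp
  simp

lemma ballotNumber_succ_succ {p j : ℕ} (hj : j ≤ p) :
    ballotNumber (p + 1) (j + 1) = ballotNumber p (j + 1) + ballotNumber p j := by
  obtain ⟨m, rfl⟩ := Nat.exists_eq_add_of_le' hj
  simp only [ballotNumber, show m + j + 1 + 1 - (j + 1) = m + 1 by omega,
    show m + j + 1 - (j + 1) = m by omega, show m + j + 1 - j = m + 1 by omega,
    Nat.factorial_succ]
  push_cast
  field_simp
  ring

lemma ballotNumber_odd_middle (q : ℕ) : ballotNumber (2 * q + 1) (q + 1) = 0 := by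
  rw [ballotNumber]
  push_cast
  ring

lemma sum_ballotNumber_succ {M : Type*} [AddCommMonoid M] [Module ℚ M] {p s : ℕ} (hs : s ≤ p + 1)
    (F : ℕ → M) :
    ∑ j ∈ range (s + 1), ballotNumber (p + 1) j • F j =
      ∑ j ∈ range (s + 1), ballotNumber p j • F j + ∑ j ∈ range s, ballotNumber p j • F (j + 1) := by
  rw [sum_range_succ', sum_range_succ' (fun j => ballotNumber p j • F j),
    ballotNumber_zero_right, ballotNumber_zero_right, add_right_comm, ← sum_add_distrib]
  congr 1
  refine sum_congr rfl fun j hj => ?_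
  rw [ballotNumber_succ_succ (by rw [mem_range] at hj; omega), add_smul]

theorem two_mul_X_pow_eq_sum_U (R : Type*) [CommRing R] [Algebra ℚ R] (p : ℕ) :
    (2 * X : R[X]) ^ p = ∑ j ∈ range (p / 2 + 1), ballotNumber p j • Chebyshev.U R (p - 2 * j) := by
  induction p with
  | zero => simp [ballotNumber_zero_right]
  | succ p ih =>
    have hU (m : ℤ) : 2 * X * Chebyshev.U R m = Chebyshev.U R (m + 1) + Chebyshev.U R (m - 1) := by
      rw [Chebyshev.U_add_one]; ring
    rw [_root_.pow_succ', ih, mul_sum]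
    simp only [mul_smul_comm, hU, smul_add, sum_add_distrib]
    -- The extra boundary term is `U (-1) = 0` for even `p`, and has coefficient
    -- `ballotNumber p (p / 2 + 1) = 0` for odd `p`.
    obtain ⟨q, rfl | rfl⟩ := Nat.even_or_odd' p
    · rw [show (2 * q + 1) / 2 = q by omega, show 2 * q / 2 = q by omega,
        sum_ballotNumber_succ (by omega), sum_range_succ (fun j => _ • Chebyshev.U R (_ - 1)),
        show ((2 * q : ℕ) : ℤ) - 2 * q - 1 = -1 by push_cast; ring, Chebyshev.U_neg_one,
        smul_zero, add_zero]
      congr 1 <;> refine sum_congr rfl fun j _ => ?_ <;> congr 2 <;> push_cast <;> ring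
    · rw [show (2 * q + 1 + 1) / 2 = q + 1 by omega, show (2 * q + 1) / 2 = q by omega,
        sum_ballotNumber_succ (p := 2 * q + 1) (by omega),
        sum_range_succ (fun j => ballotNumber (2 * q + 1) j • _) (q + 1),
        ballotNumber_odd_middle, zero_smul, add_zero]
      congr 1 <;> refine sum_congr rfl fun j _ => ?_ <;> congr 2 <;> push_cast <;> ring

lemma choose_mul_ballotNumber {n k j : ℕ} (h : k + 2 * j ≤ n) :
    (n.choose (k + 2 * j) : ℚ) * ballotNumber (k + 2 * j) j =
      n ! * (k + 1) / ((n - (k + 2 * j))! * (k + j + 1)! * j !) := by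
  rw [Nat.cast_choose ℚ h, ballotNumber, show k + 2 * j + 1 - j = k + j + 1 by omega]
  push_cast
  field_simp
  ring

theorem physHermite_eq_sum_sum_U (n : ℕ) :
    physHermite n = ∑ p ∈ range (n + 1), ∑ j ∈ range (p / 2 + 1),
      C ((n.choose p : ℚ) * (physHermite (n - p)).eval 0 * ballotNumber p j) *
        Chebyshev.U ℚ (p - 2 * j) := by
  rw [physHermite_eq_sum_choose_mul_pow]
  refine sum_congr rfl fun p _ => ?_
  rw [two_mul_X_pow_eq_sum_U, mul_sum]
  refine sum_congr rfl fun j _ => ?_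
  simp only [smul_eq_C_mul, map_mul]
  ring

lemma sum_range_sum_range_half_eq_sum_even {M : Type*} [AddCommMonoid M] (n : ℕ)
    (f : ℕ → ℕ → M) :
    ∑ p ∈ range (n + 1), ∑ j ∈ range (p / 2 + 1), f p j =
      ∑ k ∈ range (n + 1), ∑ l ∈ (range (n - k + 1)).filter (fun l => Even l), f (k + l) (l / 2) := by
  rw [sum_sigma', sum_sigma']
  refine sum_nbij' (fun x => ⟨x.1 - 2 * x.2, 2 * x.2⟩) (fun x => ⟨x.1 + x.2, x.2 / 2⟩)
    ?_ ?_ ?_ ?_ ?_ <;> simp only [mem_sigma, mem_range, mem_filter]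
  · rintro ⟨p, j⟩ h
    dsimp only at h ⊢
    exact ⟨by omega, by omega, even_two_mul j⟩
  · rintro ⟨k, l⟩ ⟨hk, hl, j, rfl⟩
    omega
  · rintro ⟨p, j⟩ h
    dsimp only at h
    exact Sigma.ext (by dsimp only; omega) (heq_of_eq (by dsimp only; omega))
  · rintro ⟨k, l⟩ ⟨-, -, j, rfl⟩
    exact Sigma.ext (by dsimp only; omega) (heq_of_eq (by dsimp only; omega))
  · rintro ⟨p, j⟩ h
    dsimp only at h ⊢
    congr <;> omega

theorem stmt_10 (n : ℕ) :
    physHermite n =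
      C (n ! : ℚ) *
        ∑ k ∈ Finset.range (n + 1),
          C (((k : ℚ) + 1) *
              ∑ l ∈ (Finset.range (n - k + 1)).filter (fun l => Even l),
                (physHermite (n - k - l)).eval 0 /
                  ((n - k - l)! * ((2 * k + l + 2) / 2)! * (l / 2)!)) *
            Polynomial.Chebyshev.U ℚ k := by
  rw [physHermite_eq_sum_sum_U, sum_range_sum_range_half_eq_sum_even, mul_sum]
  refine sum_congr rfl fun k hk => ?_
  rw [mul_sum, map_sum, sum_mul, mul_sum]
  refine sum_congr rfl fun l hl => ?_
  obtain ⟨hl, j, rfl⟩ := mem_filter.1 hl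
  rw [mem_range] at hk hl
  rw [show (j + j) / 2 = j by omega, show k + (j + j) = k + 2 * j by omega,
    show n - k - (j + j) = n - (k + 2 * j) by omega,
    show (2 * k + (j + j) + 2) / 2 = k + j + 1 by omega,
    show ((k + 2 * j : ℕ) : ℤ) - 2 * j = k by push_cast; ring,
    mul_right_comm (_ : ℚ) (eval _ _), choose_mul_ballotNumber (by omega), ← mul_assoc, ← map_mul]
  congr 2
  ring
end

section
/- For every nonnegative integer n and x in (-1,1), U_n(x) = ((-1)^n 2^n (n+1)! / (2n+1)!) (1-x^2)^{-1/2} · d^n/dx^n [ (1-x^2)^{n+1/2} ] (Rodrigues' formula for Chebyshev polynomials of the second kind). -/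
/-!
Write `f_a(y) = (1 - y²)^a`. Since `f_{a+1} = (1 - y²) f_a` and `f_{a+1}' = -2(a+1) y f_a`,
Leibniz's rule expresses `D^{k+1} f_{a+1}` in two ways through `D^k (y f_a)`; eliminating that term
gives `(2a + 1 - k) D^{k+1} f_{a+1} = 2(a+1) ((1 - x²) D^{k+1} f_a - (k+1) x D^k f_a)`.
For `a = n + 1/2` and `k = n` this is a recursion proving `D^n f_{n+1/2} = c_n √(1 - x²) U_n` by
induction, the inductive step being the identity `(1 - x²) U_n' = (n+2) x U_n - (n+1) U_{n+1}`.
-/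

open Polynomial Nat Set Filter Topology

namespace Polynomial.Chebyshev

theorem one_sub_X_sq_mul_derivative_U_eq_poly_in_U (R : Type*) [CommRing R] (n : ℤ) :
    (1 - X ^ 2) * derivative (U R n) =
      ((n : R[X]) + 2) * X * U R n - ((n : R[X]) + 1) * U R (n + 1) := by
  have h₁ := add_one_mul_T_eq_poly_in_U (R := R) n
  have h₂ := U_eq_X_mul_U_add_T R n
  linear_combination h₁ + ((n : R[X]) + 1) * h₂

end Polynomial.Chebyshev

theorem iteratedDeriv_succ_fun_id_mul {𝕜 : Type*} [NontriviallyNormedField 𝕜] {h : 𝕜 → 𝕜}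
    {x : 𝕜} {k : ℕ} (hh : ContDiffAt 𝕜 (k + 1) h x) :
    iteratedDeriv (k + 1) (fun y => y * h y) x =
      x * iteratedDeriv (k + 1) h x + (k + 1) * iteratedDeriv k h x := by
  rw [iteratedDeriv_fun_mul (f := fun y => y) contDiffAt_id hh, Finset.sum_range_succ',
    Finset.sum_range_succ']
  simp only [iteratedDeriv_fun_id, Nat.add_eq_zero_iff, one_ne_zero, and_false, ↓reduceIte,
    Nat.add_eq_right, mul_zero, zero_mul, Finset.sum_const_zero, zero_add, choose_one_right,
    choose_zero_right, add_tsub_cancel_right, tsub_zero, cast_add, cast_one, one_mul, mul_one]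
  ring

section OneSubSqRpow

variable {x : ℝ}

lemma one_sub_sq_pos_of_mem_Ioo (hx : x ∈ Ioo (-1 : ℝ) 1) : 0 < 1 - x ^ 2 := by
  obtain ⟨h₁, h₂⟩ := hx
  nlinarith

lemma hasDerivAt_one_sub_sq_rpow (a : ℝ) (hx : x ∈ Ioo (-1 : ℝ) 1) :
    HasDerivAt (fun y : ℝ => (1 - y ^ 2) ^ a) (-2 * a * x * (1 - x ^ 2) ^ (a - 1)) x := by
  have h : HasDerivAt (fun y : ℝ => 1 - y ^ 2) (-(2 * x)) x := by
    simpa using (hasDerivAt_pow 2 x).const_sub 1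
  convert h.rpow_const (p := a) (Or.inl (one_sub_sq_pos_of_mem_Ioo hx).ne') using 1
  ring

lemma contDiffAt_one_sub_sq_rpow (a : ℝ) {m : WithTop ℕ∞} (hx : x ∈ Ioo (-1 : ℝ) 1) :
    ContDiffAt ℝ m (fun y : ℝ => (1 - y ^ 2) ^ a) x := by
  have : ContDiffAt ℝ m (fun y : ℝ => 1 - y ^ 2) x := by fun_prop
  exact this.rpow_const_of_ne (one_sub_sq_pos_of_mem_Ioo hx).ne'

lemma iteratedDeriv_one_sub_sq_rpow_add_one (a : ℝ) (k : ℕ) (hx : x ∈ Ioo (-1 : ℝ) 1) :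
    (2 * a + 1 - k) * iteratedDeriv (k + 1) (fun y : ℝ => (1 - y ^ 2) ^ (a + 1)) x =
      2 * (a + 1) * ((1 - x ^ 2) * iteratedDeriv (k + 1) (fun y : ℝ => (1 - y ^ 2) ^ a) x
        - (k + 1) * x * iteratedDeriv k (fun y : ℝ => (1 - y ^ 2) ^ a) x) := by
  set f : ℝ → ℝ := fun y => (1 - y ^ 2) ^ a
  have hnhds : Ioo (-1 : ℝ) 1 ∈ 𝓝 x := isOpen_Ioo.mem_nhds hx
  have hf : ContDiffAt ℝ (k + 1) f x := contDiffAt_one_sub_sq_rpow a hx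
  have hyf : ContDiffAt ℝ (k + 1) (fun y => y * f y) x := contDiffAt_id.mul hf
  have hyyf : ContDiffAt ℝ (k + 1) (fun y => y * (y * f y)) x := contDiffAt_id.mul hyf
  have hderiv : deriv (fun y : ℝ => (1 - y ^ 2) ^ (a + 1)) =ᶠ[𝓝 x]
      fun y => -2 * (a + 1) * (y * f y) := by
    filter_upwards [hnhds] with y hy
    rw [(hasDerivAt_one_sub_sq_rpow (a + 1) hy).deriv, add_sub_cancel_right]
    ring
  have hprod : (fun y : ℝ => (1 - y ^ 2) ^ (a + 1)) =ᶠ[𝓝 x]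
      fun y => f y - y * (y * f y) := by
    filter_upwards [hnhds] with y hy
    rw [Real.rpow_add_one (one_sub_sq_pos_of_mem_Ioo hy).ne']
    ring
  have hviaDeriv : iteratedDeriv (k + 1) (fun y : ℝ => (1 - y ^ 2) ^ (a + 1)) x =
      -2 * (a + 1) * iteratedDeriv k (fun y => y * f y) x := by
    rw [iteratedDeriv_succ', hderiv.iteratedDeriv_eq, iteratedDeriv_const_mul_field]
  have hviaProduct : iteratedDeriv (k + 1) (fun y : ℝ => (1 - y ^ 2) ^ (a + 1)) x =
      iteratedDeriv (k + 1) f x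
        - (x * (x * iteratedDeriv (k + 1) f x + (k + 1) * iteratedDeriv k f x)
          + (k + 1) * iteratedDeriv k (fun y => y * f y) x) := by
    rw [hprod.iteratedDeriv_eq, iteratedDeriv_fun_sub hf hyyf,
      iteratedDeriv_succ_fun_id_mul hyf, iteratedDeriv_succ_fun_id_mul hf]
  linear_combination (-(k : ℝ) - 1) * hviaDeriv + 2 * (a + 1) * hviaProduct

end OneSubSqRpow

noncomputable def rodriguesCoeffU (n : ℕ) : ℝ := (-1) ^ n * (2 * n + 1)! / (2 ^ n * (n + 1)!)

lemma rodriguesCoeffU_succ (n : ℕ) :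
    (n + 2) * rodriguesCoeffU (n + 1) = -((2 * n + 3) * (n + 1)) * rodriguesCoeffU n := by
  have e : 2 * (n + 1) + 1 = (2 * n + 1) + 1 + 1 := by ring
  rw [rodriguesCoeffU, rodriguesCoeffU, e, factorial_succ (2 * n + 1 + 1),
    factorial_succ (2 * n + 1), factorial_succ (n + 1)]
  push_cast
  field_simp
  ring

lemma mul_rodriguesCoeffU_eq_one (n : ℕ) :
    ((-1 : ℝ) ^ n * 2 ^ n * (n + 1)! / (2 * n + 1)!) * rodriguesCoeffU n = 1 := by
  have hsign : (-1 : ℝ) ^ n * (-1) ^ n = 1 := by rw [← mul_pow]; norm_num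
  rw [rodriguesCoeffU]
  field_simp
  linear_combination hsign

theorem iteratedDeriv_one_sub_sq_rpow_eq_U (n : ℕ) {x : ℝ} (hx : x ∈ Ioo (-1 : ℝ) 1) :
    iteratedDeriv n (fun y : ℝ => (1 - y ^ 2) ^ ((n : ℝ) + 1 / 2)) x =
      rodriguesCoeffU n * ((1 - x ^ 2) ^ (1 / 2 : ℝ) * (Chebyshev.U ℝ n).eval x) := by
  induction n generalizing x with
  | zero => simp [rodriguesCoeffU]
  | succ n ih =>
    set s : ℝ := (1 - x ^ 2) ^ (1 / 2 : ℝ)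
    have hne : 1 - x ^ 2 ≠ 0 := (one_sub_sq_pos_of_mem_Ioo hx).ne'
    have hs : (1 - x ^ 2) * (1 - x ^ 2) ^ (1 / 2 - 1 : ℝ) = s := by
      rw [Real.rpow_sub_one hne, mul_div_cancel₀ _ hne]
    have hB : iteratedDeriv (n + 1) (fun y : ℝ => (1 - y ^ 2) ^ ((n : ℝ) + 1 / 2)) x =
        rodriguesCoeffU n * (-2 * (1 / 2) * x * (1 - x ^ 2) ^ (1 / 2 - 1 : ℝ)
          * (Chebyshev.U ℝ n).eval x + s * (derivative (Chebyshev.U ℝ n)).eval x) := by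
      have hev : iteratedDeriv n (fun y : ℝ => (1 - y ^ 2) ^ ((n : ℝ) + 1 / 2)) =ᶠ[𝓝 x]
          fun y => rodriguesCoeffU n * ((1 - y ^ 2) ^ (1 / 2 : ℝ) * (Chebyshev.U ℝ n).eval y) :=
        eventually_of_mem (isOpen_Ioo.mem_nhds hx) fun y hy => ih hy
      rw [iteratedDeriv_succ, hev.deriv_eq]
      exact (((hasDerivAt_one_sub_sq_rpow (1 / 2) hx).mul
        ((Chebyshev.U ℝ n).hasDerivAt x)).const_mul _).deriv
    have hrec := iteratedDeriv_one_sub_sq_rpow_add_one ((n : ℝ) + 1 / 2) n hx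
    have hU := congrArg (eval x) (Chebyshev.one_sub_X_sq_mul_derivative_U_eq_poly_in_U ℝ n)
    simp only [eval_mul, eval_sub, eval_add, eval_one, eval_pow, eval_X, eval_natCast,
      eval_ofNat, Int.cast_natCast] at hU
    have hc := rodriguesCoeffU_succ n
    rw [ih hx, hB] at hrec
    rw [show ((n + 1 : ℕ) : ℝ) + 1 / 2 = (n : ℝ) + 1 / 2 + 1 by push_cast; ring,
      show ((n + 1 : ℕ) : ℤ) = (n : ℤ) + 1 by push_cast; ring]
    refine mul_left_cancel₀ (by positivity : ((n : ℝ) + 2) ≠ 0) ?_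
    linear_combination hrec - (2 * n + 3) * rodriguesCoeffU n * x * (Chebyshev.U ℝ n).eval x * hs
      + (2 * n + 3) * rodriguesCoeffU n * s * hU - s * (Chebyshev.U ℝ (n + 1)).eval x * hc

theorem stmt_14 (n : ℕ) (x : ℝ) (hx : x ∈ Set.Ioo (-1:ℝ) 1) :
    (Chebyshev.U ℝ n).eval x =
      ((-1 : ℝ) ^ n * 2 ^ n * (n + 1)! / (2 * n + 1)!) *
        (1 - x ^ 2) ^ (-(1 : ℝ) / 2) *
        iteratedDeriv n (fun y : ℝ => (1 - y ^ 2) ^ ((n : ℝ) + 1 / 2)) x := by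
  have hinv : (1 - x ^ 2) ^ (-(1 : ℝ) / 2) * (1 - x ^ 2) ^ (1 / 2 : ℝ) = 1 := by
    rw [← Real.rpow_add (one_sub_sq_pos_of_mem_Ioo hx)]
    norm_num
  rw [iteratedDeriv_one_sub_sq_rpow_eq_U n hx]
  linear_combination -((1 - x ^ 2) ^ (-(1 : ℝ) / 2) * (1 - x ^ 2) ^ (1 / 2 : ℝ) *
    (Chebyshev.U ℝ n).eval x) * mul_rodriguesCoeffU_eq_one n - (Chebyshev.U ℝ n).eval x * hinv
end
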